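/- Let λ be an integrable radial weight on the unit disc 𝔻 with Bergman coefficients α_n, and let j ∈ ℕ. For a holomorphic polynomial g(z) = Σ_{n=0}^N g_n z^n define M_j g(z) = Σ_{n=0}^N g_n · ((n+j)!·(n+j)!)/((n+2j)!·n!) · (α_{n+j}/α_n) · z^{n+2j}. Then for every holomorphic polynomial h one has the adjoint identity ⟨∂^j h/∂z^j, g⟩_λ = ⟨h, ∂^j (M_j g)/∂z^j⟩_λ. -/

import Mathlib

open MeasureTheory Complex Filter Metric

noncomputable section

/-- The open unit disc in `ℂ`. -/
def unitDisc : Set ℂ := Metric.ball 0 1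

/-- The weighted measure `λ(|z|) dA` on the unit disc. -/
def wMeasure (lam : ℝ → ℝ) : Measure ℂ :=
  (volume.restrict unitDisc).withDensity (fun z => ENNReal.ofReal (lam ‖z‖))

/-- Weighted `L²` norm squared `‖f‖²_{0,λ}`. -/
def wNormSq (lam : ℝ → ℝ) (f : ℂ → ℂ) : ℝ :=
  ∫ z in unitDisc, ‖f z‖ ^ 2 * lam ‖z‖

/-- Weighted `L²` norm `‖f‖_{0,λ}`. -/
def wNorm (lam : ℝ → ℝ) (f : ℂ → ℂ) : ℝ := Real.sqrt (wNormSq lam f)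

/-- Weighted inner product `⟨f,g⟩_λ`. -/
def wInner (lam : ℝ → ℝ) (f g : ℂ → ℂ) : ℂ :=
  ∫ z in unitDisc, f z * (starRingEnd ℂ) (g z) * (lam ‖z‖ : ℂ)

/-- Wirtinger derivative `∂/∂z`. -/
def wdz (f : ℂ → ℂ) (z : ℂ) : ℂ :=
  (fderiv ℝ f z 1 - Complex.I * fderiv ℝ f z Complex.I) / 2

/-- Wirtinger derivative `∂/∂z̄`. -/
def wdzbar (f : ℂ → ℂ) (z : ℂ) : ℂ :=
  (fderiv ℝ f z 1 + Complex.I * fderiv ℝ f z Complex.I) / 2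

/-- Mixed Wirtinger derivative `∂_z^a ∂_{z̄}^b f`. -/
def mixedD (a b : ℕ) (f : ℂ → ℂ) : ℂ → ℂ := wdz^[a] (wdzbar^[b] f)

/-- Weighted Sobolev norm squared `‖f‖²_{k,λ}`. -/
def sobNormSq (lam : ℝ → ℝ) (k : ℕ) (f : ℂ → ℂ) : ℝ :=
  ∑ p ∈ (Finset.range (k+1) ×ˢ Finset.range (k+1)).filter (fun p => p.1 + p.2 ≤ k),
    wNormSq lam (mixedD p.1 p.2 f)

/-- Weighted Sobolev norm `‖f‖_{k,λ}`. -/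
def sobNorm (lam : ℝ → ℝ) (k : ℕ) (f : ℂ → ℂ) : ℝ := Real.sqrt (sobNormSq lam k f)

/-- Membership in the weighted Sobolev space `W^k(λ)`. -/
def MemWk (lam : ℝ → ℝ) (k : ℕ) (f : ℂ → ℂ) : Prop :=
  ∀ a b : ℕ, a + b ≤ k → MemLp (mixedD a b f) 2 (wMeasure lam)

/-- `Bf` is (a representative of) the weighted Bergman projection `B_λ f`:
it is holomorphic on the disc, lies in `L²(λ)`, and `f - Bf` is orthogonal to
every holomorphic function in `L²(λ)`. -/
def IsBergmanProj (lam : ℝ → ℝ) (f Bf : ℂ → ℂ) : Prop :=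
  DifferentiableOn ℂ Bf unitDisc ∧ MemLp Bf 2 (wMeasure lam) ∧
    ∀ g : ℂ → ℂ, DifferentiableOn ℂ g unitDisc → MemLp g 2 (wMeasure lam) →
      wInner lam (fun z => f z - Bf z) g = 0

/-- The moment `∫₀¹ r^{2n+1} λ(r) dr`. -/
def bergmanMoment (lam : ℝ → ℝ) (n : ℕ) : ℝ := ∫ r in (0:ℝ)..1, r ^ (2*n+1) * lam r

/-- The Bergman coefficient `α_n = (2π ∫₀¹ r^{2n+1} λ(r) dr)⁻¹`. -/
def bergmanCoeff (lam : ℝ → ℝ) (n : ℕ) : ℝ := (2 * Real.pi * bergmanMoment lam n)⁻¹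

/-- The ratio `((n+j)!·(n+j)!)/((n+2j)!·n!)`. -/
def factRatio (j n : ℕ) : ℝ :=
  ((Nat.factorial (n+j) * Nat.factorial (n+j) : ℕ) : ℝ) /
    ((Nat.factorial (n+2*j) * Nat.factorial n : ℕ) : ℝ)

/-- The iterated derivative `∂^j p/∂z^j` of a holomorphic polynomial. -/
def polyDerivIter (j : ℕ) (p : Polynomial ℂ) : Polynomial ℂ :=
  (fun q => Polynomial.derivative q)^[j] p

/-- The `N`-th Taylor polynomial at the origin, `S_N g`. -/
def taylorPartial (N : ℕ) (g : ℂ → ℂ) (z : ℂ) : ℂ :=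
  ∑ n ∈ Finset.range (N+1), (iteratedDeriv n g 0 / (n.factorial : ℂ)) * z ^ n

end

/-- The operator `M_j` on polynomials of degree at most `N`:
`M_j g = Σ_{n=0}^N g_n · ((n+j)!(n+j)!)/((n+2j)!n!) · (α_{n+j}/α_n) · z^{n+2j}`. -/
noncomputable def Mop (lam : ℝ → ℝ) (j N : ℕ) (g : Polynomial ℂ) : Polynomial ℂ :=
  ∑ n ∈ Finset.range (N+1),
    Polynomial.C (g.coeff n *
      ((factRatio j n * (bergmanCoeff lam (n+j) / bergmanCoeff lam n) : ℝ) : ℂ)) *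
      Polynomial.X ^ (n + 2*j)


/-!
The monomials `z ^ n` are orthogonal in `L²(λ)` with `‖z ^ n‖² = 1 / α_n` (polar coordinates),
so `⟨p, q⟩_λ = ∑ pₙ q̄ₙ / α_n` for polynomials. Since `∂^j` sends the coefficient at `n + j` to
position `n` with the factor `(n + j)! / n!`, both sides of the identity become sums of
`h_{n+j} ḡₙ (n + j)! / (n! α_n)`: the coefficients of `M_j` are chosen exactly to make this match.
-/

open Real Polynomial Set

theorem integral_exp_int_mul_mul_I {k : ℤ} (hk : k ≠ 0) :
    ∫ θ in -π..π, Complex.exp (k * θ * Complex.I) = 0 := by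
  have hc : (k : ℂ) * Complex.I ≠ 0 := mul_ne_zero (Int.cast_ne_zero.mpr hk) Complex.I_ne_zero
  simp_rw [mul_right_comm _ _ Complex.I]
  rw [integral_exp_mul_complex hc, div_eq_zero_iff, sub_eq_zero]
  refine Or.inl (Complex.exp_eq_exp_iff_exists_int.mpr ⟨k, ?_⟩)
  push_cast
  ring

theorem integral_unitDisc_eq_integral_polarCoord {E : Type*} [NormedAddCommGroup E]
    [NormedSpace ℝ E] (f : ℂ → E) :
    ∫ z in unitDisc, f z =
      ∫ p in Ioo (0 : ℝ) 1 ×ˢ Ioo (-π) π, p.1 • f (Complex.polarCoord.symm p) := by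
  have hdisc : MeasurableSet unitDisc := measurableSet_ball
  have hpre : MeasurableSet (Complex.polarCoord.symm ⁻¹' unitDisc) :=
    (show Continuous Complex.polarCoord.symm by
      simp only [funext Complex.polarCoord_symm_apply]; fun_prop).measurable hdisc
  have htarget : polarCoord.target ∩ Complex.polarCoord.symm ⁻¹' unitDisc =
      Ioo (0 : ℝ) 1 ×ˢ Ioo (-π) π := by
    ext ⟨r, θ⟩
    simp only [polarCoord_target, mem_inter_iff, mem_prod, mem_Ioi, mem_preimage, unitDisc,
      mem_ball_zero_iff, Complex.norm_polarCoord_symm, mem_Ioo]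
    constructor
    · rintro ⟨⟨hr, hθ⟩, hr1⟩
      exact ⟨⟨hr, by rwa [abs_of_pos hr] at hr1⟩, hθ⟩
    · rintro ⟨⟨hr, hr1⟩, hθ⟩
      exact ⟨⟨hr, hθ⟩, by rwa [abs_of_pos hr]⟩
  rw [← integral_indicator hdisc, ← Complex.integral_comp_polarCoord_symm,
    ← htarget, ← setIntegral_indicator hpre]
  congr 1 with p
  by_cases hp : Complex.polarCoord.symm p ∈ unitDisc <;>
    simp only [indicator_of_mem, indicator_of_notMem, hp, mem_preimage, not_false_eq_true,
      smul_zero]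

theorem polarCoord_symm_pow_mul_conj_pow (r θ : ℝ) (m n : ℕ) :
    Complex.polarCoord.symm (r, θ) ^ m * (starRingEnd ℂ) (Complex.polarCoord.symm (r, θ)) ^ n =
      (r : ℂ) ^ (m + n) * Complex.exp (((m - n : ℤ) : ℂ) * θ * Complex.I) := by
  have hpolar : Complex.polarCoord.symm (r, θ) = r * Complex.exp (θ * Complex.I) := by
    simp [Complex.exp_mul_I, ← Complex.ofReal_cos, ← Complex.ofReal_sin]
  have hconj : (starRingEnd ℂ) (Complex.exp (θ * Complex.I)) = Complex.exp (-(θ * Complex.I)) := by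
    rw [← Complex.exp_conj, map_mul, Complex.conj_ofReal, Complex.conj_I, mul_neg]
  rw [hpolar, map_mul, Complex.conj_ofReal, hconj, mul_pow, mul_pow, ← Complex.exp_nat_mul,
    ← Complex.exp_nat_mul, pow_add]
  calc _ = (r : ℂ) ^ m * r ^ n *
        Complex.exp (m * (θ * Complex.I) + n * -(θ * Complex.I)) := by
        rw [Complex.exp_add]; ring
    _ = _ := by push_cast; ring_nf

theorem integral_unitDisc_pow_mul_conj_pow_mul (lam : ℝ → ℝ) (m n : ℕ) :
    ∫ z in unitDisc, z ^ m * (starRingEnd ℂ) z ^ n * (lam ‖z‖ : ℂ) =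
      if m = n then (bergmanCoeff lam n : ℂ)⁻¹ else 0 := by
  have hpolar : ∀ p ∈ Ioo (0 : ℝ) 1 ×ˢ Ioo (-π) π,
      p.1 • (Complex.polarCoord.symm p ^ m * (starRingEnd ℂ) (Complex.polarCoord.symm p) ^ n *
        (lam ‖Complex.polarCoord.symm p‖ : ℂ)) =
      ((p.1 ^ (m + n + 1) * lam p.1 : ℝ) : ℂ) *
        Complex.exp (((m - n : ℤ) : ℂ) * p.2 * Complex.I) := by
    rintro ⟨r, θ⟩ ⟨hr, -⟩
    rw [polarCoord_symm_pow_mul_conj_pow, Complex.norm_polarCoord_symm, abs_of_pos hr.1,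
      Complex.real_smul]
    push_cast
    ring
  have hIoo : ∀ {a b : ℝ} (f : ℝ → ℂ), a ≤ b → ∫ x in Ioo a b, f x = ∫ x in a..b, f x :=
    fun f hab => by rw [intervalIntegral.integral_of_le hab, integral_Ioc_eq_integral_Ioo]
  rw [integral_unitDisc_eq_integral_polarCoord,
    setIntegral_congr_fun (measurableSet_Ioo.prod measurableSet_Ioo) hpolar,
    Measure.volume_eq_prod,
    setIntegral_prod_mul (fun r : ℝ => ((r ^ (m + n + 1) * lam r : ℝ) : ℂ))
      (fun θ : ℝ => Complex.exp (((m - n : ℤ) : ℂ) * θ * Complex.I)),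
    hIoo _ zero_le_one, hIoo _ (neg_le_self pi_pos.le), intervalIntegral.integral_ofReal]
  split_ifs with hmn
  · subst hmn
    simp only [sub_self, Int.cast_zero, zero_mul, Complex.exp_zero, intervalIntegral.integral_const,
      sub_neg_eq_add, real_smul, ofReal_add, mul_one, bergmanCoeff, two_mul, bergmanMoment,
      mul_inv_rev, ofReal_mul, ofReal_inv, inv_inv]
    ring
  · rw [integral_exp_int_mul_mul_I (sub_ne_zero.mpr (Int.natCast_inj.not.mpr hmn)), mul_zero]

theorem integrableOn_pow_mul_conj_pow_mul {lam : ℝ → ℝ}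
    (hint : IntegrableOn (fun z : ℂ => lam ‖z‖) unitDisc) (m n : ℕ) :
    IntegrableOn (fun z => z ^ m * (starRingEnd ℂ) z ^ n * (lam ‖z‖ : ℂ)) unitDisc := by
  refine Integrable.bdd_mul (c := 1) hint.ofReal (by fun_prop) ?_
  filter_upwards [ae_restrict_mem measurableSet_ball] with z hz
  have hz1 : ‖z‖ ≤ 1 := (mem_ball_zero_iff.mp hz).le
  rw [norm_mul, norm_pow, norm_pow, Complex.norm_conj]
  exact mul_le_one₀ (pow_le_one₀ (norm_nonneg z) hz1) (by positivity)
    (pow_le_one₀ (norm_nonneg z) hz1)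

theorem wInner_eval_eval {lam : ℝ → ℝ} (hint : IntegrableOn (fun z : ℂ => lam ‖z‖) unitDisc)
    (p q : ℂ[X]) :
    wInner lam (fun z => p.eval z) (fun z => q.eval z) =
      ∑' n, p.coeff n * (starRingEnd ℂ) (q.coeff n) * (bergmanCoeff lam n : ℂ)⁻¹ := by
  set M := max p.natDegree q.natDegree + 1
  have hp : p.natDegree < M := by omega
  have hq : q.natDegree < M := by omega
  have hexpand : ∀ z : ℂ, p.eval z * (starRingEnd ℂ) (q.eval z) * (lam ‖z‖ : ℂ) =
      ∑ m ∈ Finset.range M, ∑ n ∈ Finset.range M, p.coeff m * (starRingEnd ℂ) (q.coeff n) *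
        (z ^ m * (starRingEnd ℂ) z ^ n * (lam ‖z‖ : ℂ)) := by
    intro z
    rw [eval_eq_sum_range' hp, eval_eq_sum_range' hq, map_sum, Finset.sum_mul_sum,
      Finset.sum_mul]
    refine Finset.sum_congr rfl fun m _ => ?_
    rw [Finset.sum_mul]
    refine Finset.sum_congr rfl fun n _ => ?_
    rw [map_mul, map_pow]
    ring
  have hintegrable : ∀ m n : ℕ, ∀ c : ℂ,
      Integrable (fun z => c * (z ^ m * (starRingEnd ℂ) z ^ n * (lam ‖z‖ : ℂ)))
        (volume.restrict unitDisc) :=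
    fun m n c => (integrableOn_pow_mul_conj_pow_mul hint m n).const_mul c
  calc wInner lam (fun z => p.eval z) (fun z => q.eval z)
      = ∑ m ∈ Finset.range M, ∑ n ∈ Finset.range M, p.coeff m * (starRingEnd ℂ) (q.coeff n) *
          ∫ z in unitDisc, z ^ m * (starRingEnd ℂ) z ^ n * (lam ‖z‖ : ℂ) := by
        simp only [wInner, hexpand]
        rw [integral_finsetSum _ fun m _ => integrable_finsetSum _ fun n _ => hintegrable m n _]
        refine Finset.sum_congr rfl fun m _ => ?_
        rw [integral_finsetSum _ fun n _ => hintegrable m n _]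
        exact Finset.sum_congr rfl fun n _ => integral_const_mul _ _
    _ = ∑ n ∈ Finset.range M,
          p.coeff n * (starRingEnd ℂ) (q.coeff n) * (bergmanCoeff lam n : ℂ)⁻¹ := by
        simp only [integral_unitDisc_pow_mul_conj_pow_mul, mul_ite, mul_zero, Finset.sum_ite_eq]
        exact Finset.sum_congr rfl fun n hn => if_pos hn
    _ = _ := (tsum_eq_sum fun n hn => by
        rw [coeff_eq_zero_of_natDegree_lt (hp.trans_le (by simpa using hn)), zero_mul,
          zero_mul]).symm

theorem coeff_polyDerivIter (j : ℕ) (p : ℂ[X]) (m : ℕ) :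
    (polyDerivIter j p).coeff m = ((m + j).descFactorial j : ℂ) * p.coeff (m + j) := by
  rw [polyDerivIter, coeff_iterate_derivative, nsmul_eq_mul]

theorem coeff_Mop (lam : ℝ → ℝ) (j N : ℕ) (g : ℂ[X]) (k : ℕ) :
    (Mop lam j N g).coeff k = ∑ n ∈ Finset.range (N + 1), if k = n + 2 * j then
      g.coeff n * ((factRatio j n * (bergmanCoeff lam (n + j) / bergmanCoeff lam n) : ℝ) : ℂ)
      else 0 := by
  simp only [Mop, finsetSum_coeff, coeff_C_mul, coeff_X_pow, mul_ite, mul_one, mul_zero]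

theorem coeff_Mop_of_lt (lam : ℝ → ℝ) {j : ℕ} (N : ℕ) (g : ℂ[X]) {k : ℕ} (hk : k < 2 * j) :
    (Mop lam j N g).coeff k = 0 :=
  (coeff_Mop lam j N g k).trans (Finset.sum_eq_zero fun n _ => if_neg (by omega))

theorem coeff_Mop_add_two_mul (lam : ℝ → ℝ) (j : ℕ) {N : ℕ} {g : ℂ[X]} (hg : g.natDegree ≤ N)
    (n : ℕ) :
    (Mop lam j N g).coeff (n + 2 * j) =
      g.coeff n * ((factRatio j n * (bergmanCoeff lam (n + j) / bergmanCoeff lam n) : ℝ) : ℂ) := by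
  simp only [coeff_Mop, add_left_inj, Finset.sum_ite_eq, Finset.mem_range]
  split_ifs with hn
  · rfl
  · rw [coeff_eq_zero_of_natDegree_lt (by omega), zero_mul]

theorem factRatio_mul_descFactorial (j n : ℕ) :
    factRatio j n * (n + 2 * j).descFactorial j = (n + j).descFactorial j := by
  have h₁ : (n + j).factorial = n.factorial * (n + j).descFactorial j := by
    simpa using (Nat.factorial_mul_descFactorial (Nat.le_add_left j n)).symm
  have h₂ : (n + 2 * j).factorial = (n + j).factorial * (n + 2 * j).descFactorial j := by
    simpa [show n + 2 * j - j = n + j by omega] using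
      (Nat.factorial_mul_descFactorial (show j ≤ n + 2 * j by omega)).symm
  have hd : ((n + 2 * j).descFactorial j : ℝ) ≠ 0 := by
    exact_mod_cast Nat.descFactorial_eq_zero_iff_lt.not.mpr (by omega)
  rw [factRatio, h₂, h₁]
  push_cast
  field_simp

theorem descFactorial_mul_factRatio_mul_inv_bergmanCoeff (lam : ℝ → ℝ) (j n : ℕ)
    (hα : bergmanCoeff lam (n + j) ≠ 0) :
    (n + 2 * j).descFactorial j *
        (factRatio j n * (bergmanCoeff lam (n + j) / bergmanCoeff lam n)) *
        (bergmanCoeff lam (n + j))⁻¹ =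
      (n + j).descFactorial j * (bergmanCoeff lam n)⁻¹ := by
  rw [← factRatio_mul_descFactorial]
  field_simp

theorem adjoint_identity_Mop_general
    (lam : ℝ → ℝ)
    (hint : IntegrableOn (fun z : ℂ => lam ‖z‖) unitDisc)
    (hmompos : ∀ n : ℕ, 0 < bergmanMoment lam n)
    (j N : ℕ) (g : Polynomial ℂ) (hg : g.natDegree ≤ N) (h : Polynomial ℂ) :
    wInner lam (fun z => (polyDerivIter j h).eval z) (fun z => g.eval z) =
      wInner lam (fun z => h.eval z) (fun z => (polyDerivIter j (Mop lam j N g)).eval z) := by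
  rw [wInner_eval_eval hint, wInner_eval_eval hint]
  have hsummable : Summable fun m => h.coeff m *
      (starRingEnd ℂ) ((polyDerivIter j (Mop lam j N g)).coeff m) * (bergmanCoeff lam m : ℂ)⁻¹ :=
    summable_of_ne_finset_zero (s := Finset.range (h.natDegree + 1)) fun m hm => by
      rw [coeff_eq_zero_of_natDegree_lt (by simpa [Nat.lt_succ_iff] using hm), zero_mul, zero_mul]
  -- `M_j g` is divisible by `z ^ (2 * j)`, so the first `j` coefficients of `∂^j (M_j g)` vanish.
  rw [← hsummable.sum_add_tsum_nat_add j, Finset.sum_eq_zero, zero_add]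
  · congr 1 with n
    have hα : bergmanCoeff lam (n + j) ≠ 0 :=
      inv_ne_zero (by have := hmompos (n + j); positivity)
    have hweight := congrArg ((↑) : ℝ → ℂ)
      (descFactorial_mul_factRatio_mul_inv_bergmanCoeff lam j n hα)
    push_cast at hweight
    rw [coeff_polyDerivIter, coeff_polyDerivIter, add_assoc, ← two_mul,
      coeff_Mop_add_two_mul lam j hg]
    simp only [map_mul, map_natCast, Complex.conj_ofReal]
    push_cast
    linear_combination -(h.coeff (n + j) * (starRingEnd ℂ) (g.coeff n)) * hweight
  · intro m hm
    rw [coeff_polyDerivIter, coeff_Mop_of_lt lam N g (by have := Finset.mem_range.mp hm; omega),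
      mul_zero, map_zero, mul_zero, zero_mul]

/-- The adjoint identity `⟨∂^j h/∂z^j, g⟩_λ = ⟨h, ∂^j (M_j g)/∂z^j⟩_λ`
for the explicitly defined operator `M_j`. -/
theorem adjoint_identity_Mop
    (lam : ℝ → ℝ)
    (hcont : ContinuousOn lam (Set.Ico 0 1))
    (hnn : ∀ r ∈ Set.Ico (0:ℝ) 1, 0 ≤ lam r)
    (hint : IntegrableOn (fun z : ℂ => lam ‖z‖) unitDisc)
    (hmom : ∀ n : ℕ, IntervalIntegrable (fun r => r ^ (2*n+1) * lam r) volume 0 1)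
    (hmompos : ∀ n : ℕ, 0 < bergmanMoment lam n)
    (j N : ℕ) (g : Polynomial ℂ) (hg : g.natDegree ≤ N) (h : Polynomial ℂ) :
    wInner lam (fun z => (polyDerivIter j h).eval z) (fun z => g.eval z) =
      wInner lam (fun z => h.eval z) (fun z => (polyDerivIter j (Mop lam j N g)).eval z) :=
  adjoint_identity_Mop_general lam hint hmompos j N g hg h
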